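/- arXiv:1502.06759 — 5 statements merged into one kernel-verified Lean document; each statement's English description precedes it below -/
import Mathlib

section
/- Let P and Q be closed subspaces of a finite-dimensional Hilbert space H. Then the orthogonal projections Π_P and Π_Q commute if and only if every eigenvalue of the self-adjoint operator Π_P ∘ Π_Q restricted to P lies in {0, 1}. -/
open Module End

open scoped InnerProductSpace

/-! Both conditions say that `P` is invariant under `Π_Q`. For the commutation this is the
criterion for an idempotent to commute with an operator, the invariance of `Pᗮ` being automatic
since `Π_Q` is self-adjoint. The compression `T = Π_P Π_Q |_P` is self-adjoint, so its eigenvalues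
lie in `{0, 1}` iff `T² = T`. If `P` is invariant, `T` is the restriction of `Π_Q`, hence
idempotent; conversely, `T² = T` gives `‖Π_P Π_Q x‖² = ⟪T x, x⟫ = ‖Π_Q x‖²` for `x ∈ P`, which
forces `Π_Q x ∈ P`. -/

namespace LinearMap.IsSymmetric

variable {𝕜 E : Type*} [RCLike 𝕜] [NormedAddCommGroup E] [InnerProductSpace 𝕜 E]
  [FiniteDimensional 𝕜 E] {T : Module.End 𝕜 E}

theorem isIdempotentElem_iff (hT : T.IsSymmetric) :
    IsIdempotentElem T ↔ ∀ μ : 𝕜, HasEigenvalue T μ → μ = 0 ∨ μ = 1 := by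
  refine ⟨fun hidem μ hμ ↦ hidem.spectrum_subset 𝕜 hμ.mem_spectrum, fun h ↦ ?_⟩
  refine (hT.eigenvectorBasis rfl).toBasis.ext fun i ↦ ?_
  rcases h _ (hT.hasEigenvalue_eigenvalues rfl i) with h0 | h1
  · simp [hT.apply_eigenvectorBasis, h0]
  · simp [hT.apply_eigenvectorBasis, h1]

end LinearMap.IsSymmetric

namespace Submodule

variable {𝕜 E : Type*} [RCLike 𝕜] [NormedAddCommGroup E] [InnerProductSpace 𝕜 E]
  (K : Submodule 𝕜 E) [K.HasOrthogonalProjection]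

noncomputable def compress (A : E →L[𝕜] E) : K →L[𝕜] K :=
  K.orthogonalProjectionOnto ∘L A ∘L K.subtypeL

variable {K}

theorem inner_compress_apply (A : E →L[𝕜] E) (x y : K) :
    ⟪K.compress A x, y⟫_𝕜 = ⟪A x, y⟫_𝕜 :=
  K.inner_orthogonalProjectionOnto_eq_of_mem_right y (A x)

theorem isSymmetric_compress {A : E →L[𝕜] E} (hA : (A : E →ₗ[𝕜] E).IsSymmetric) :
    (K.compress A : K →ₗ[𝕜] K).IsSymmetric := fun x y ↦
  calc ⟪K.compress A x, y⟫_𝕜 = ⟪A x, y⟫_𝕜 := inner_compress_apply A x y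
    _ = ⟪(x : E), A y⟫_𝕜 := hA x y
    _ = ⟪x, K.compress A y⟫_𝕜 := (K.inner_orthogonalProjectionOnto_eq_of_mem_left x (A y)).symm

theorem coe_compress_apply_of_mem_invtSubmodule {A : E →L[𝕜] E}
    (hK : K ∈ invtSubmodule (A : E →ₗ[𝕜] E)) (x : K) : (K.compress A x : E) = A x :=
  congrArg Subtype.val (K.orthogonalProjectionOnto_mem_subspace_eq_self ⟨A x, hK x.2⟩)

theorem isIdempotentElem_compress {A : E →L[𝕜] E} (hA : IsIdempotentElem A)
    (hK : K ∈ invtSubmodule (A : E →ₗ[𝕜] E)) :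
    IsIdempotentElem (K.compress A : Module.End 𝕜 K) := by
  ext x
  simp only [Module.End.mul_apply, ContinuousLinearMap.coe_coe,
    coe_compress_apply_of_mem_invtSubmodule hK]
  exact congrArg (· x) hA.eq

theorem isIdempotentElem_compress_starProjection_iff (L : Submodule 𝕜 E)
    [L.HasOrthogonalProjection] :
    IsIdempotentElem (K.compress L.starProjection : Module.End 𝕜 K) ↔
      K ∈ invtSubmodule (L.starProjection : E →ₗ[𝕜] E) := by
  refine ⟨fun h x hx ↦ ?_,
    fun hK ↦ isIdempotentElem_compress L.isIdempotentElem_starProjection hK⟩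
  set T : Module.End 𝕜 K := (K.compress L.starProjection).toLinearMap
  have hT : T.IsSymmetric := isSymmetric_compress L.starProjection_isSymmetric
  lift x to K using hx
  have key : ‖T x‖ ^ 2 = ‖L.starProjection x‖ ^ 2 := by
    calc ‖T x‖ ^ 2 = RCLike.re ⟪T x, T x⟫_𝕜 := (inner_self_eq_norm_sq _).symm
      _ = RCLike.re ⟪T (T x), x⟫_𝕜 := by rw [hT (T x) x]
      _ = RCLike.re ⟪T x, x⟫_𝕜 := by rw [← Module.End.mul_apply, h.eq]
      _ = RCLike.re ⟪L.starProjection x, x⟫_𝕜 := congrArg _ (inner_compress_apply _ x x)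
      _ = ‖L.starProjection x‖ ^ 2 := by rw [re_inner_starProjection_eq_normSq]; rfl
  show L.starProjection x ∈ K
  rw [mem_iff_norm_starProjection]
  exact (sq_eq_sq₀ (norm_nonneg _) (norm_nonneg _)).1 key

theorem commute_starProjection_iff_mem_invtSubmodule (L : Submodule 𝕜 E)
    [L.HasOrthogonalProjection] :
    Commute K.starProjection L.starProjection ↔
      K ∈ invtSubmodule (L.starProjection : E →ₗ[𝕜] E) := by
  rw [ContinuousLinearMap.IsIdempotentElem.commute_iff K.isIdempotentElem_starProjection,
    range_starProjection, ker_starProjection]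
  exact and_iff_left_of_imp L.starProjection_isSymmetric.orthogonalComplement_mem_invtSubmodule

end Submodule

theorem commute_iff_eigenvalues_zero_one
    {H : Type*} [NormedAddCommGroup H] [InnerProductSpace ℂ H] [FiniteDimensional ℂ H]
    (P Q : Submodule ℂ H) :
    let projP : H →L[ℂ] H := P.subtypeL.comp (P.orthogonalProjectionOnto)
    let projQ : H →L[ℂ] H := Q.subtypeL.comp (Q.orthogonalProjectionOnto)
    let T : Module.End ℂ P :=
      (P.orthogonalProjectionOnto.comp (projQ.comp P.subtypeL)).toLinearMap
    (projP.comp projQ = projQ.comp projP) ↔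
      ∀ μ : ℂ, Module.End.HasEigenvalue T μ → μ = 0 ∨ μ = 1 := by
  intro projP projQ T
  have hT : T.IsSymmetric := Submodule.isSymmetric_compress Q.starProjection_isSymmetric
  calc projP.comp projQ = projQ.comp projP
      ↔ Commute P.starProjection Q.starProjection := Iff.rfl
    _ ↔ P ∈ invtSubmodule (Q.starProjection : H →ₗ[ℂ] H) :=
      P.commute_starProjection_iff_mem_invtSubmodule Q
    _ ↔ IsIdempotentElem T := (P.isIdempotentElem_compress_starProjection_iff Q).symm
    _ ↔ ∀ μ : ℂ, HasEigenvalue T μ → μ = 0 ∨ μ = 1 := hT.isIdempotentElem_iff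
end

section
/- Let H be a Hilbert space and let a, p be closed subspaces of H. Then the Sasaki projection a & p = p ∧ (a ∨ pᗮ) in the lattice of closed subspaces equals the closure of the image of a under the orthogonal projection Π_p, i.e., a & p = closure{Π_p(ψ) | ψ ∈ a}. (In finite dimension, a & p = {Π_p(ψ) | ψ ∈ a}.) -/
/-!
Write `P` for the orthogonal projection onto `p`. Since `P` kills `pᗮ`, it maps `a ⊔ pᗮ` onto
`P a`; a vector `x ∈ p` is fixed by `P`, so if `x` also lies in the closure of `a ⊔ pᗮ` then it
lies in the closure of `P a`. Conversely `P v = v - (v - P v) ∈ a ⊔ pᗮ` for `v ∈ a`, and `P a ⊆ p`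
with `p` closed.
-/

namespace Submodule

variable {𝕜 E : Type*} [RCLike 𝕜] [NormedAddCommGroup E] [InnerProductSpace 𝕜 E]
  (a K : Submodule 𝕜 E) [K.HasOrthogonalProjection]

theorem isClosed_of_hasOrthogonalProjection : IsClosed (K : Set E) :=
  K.orthogonal_orthogonal ▸ Kᗮ.isClosed_orthogonal

theorem map_starProjection_sup_orthogonal :
    (a ⊔ Kᗮ).map (K.starProjection : E →ₗ[𝕜] E) = a.map (K.starProjection : E →ₗ[𝕜] E) := by
  rw [Submodule.map_sup, LinearMap.le_ker_iff_map.mp K.ker_starProjection.ge, sup_bot_eq]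

theorem map_starProjection_le_sup_orthogonal :
    a.map (K.starProjection : E →ₗ[𝕜] E) ≤ a ⊔ Kᗮ := by
  rintro _ ⟨v, hv, rfl⟩
  rw [ContinuousLinearMap.coe_coe, ← sub_sub_cancel v (K.starProjection v)]
  exact sub_mem (mem_sup_left hv) (mem_sup_right (K.sub_starProjection_mem_orthogonal v))

end Submodule

theorem sasaki_eq_closure_image_projection_general
    {H : Type*} [NormedAddCommGroup H] [InnerProductSpace ℂ H]
    (a p : Submodule ℂ H)
    [p.HasOrthogonalProjection] :
    p ⊓ (a ⊔ pᗮ).topologicalClosure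
      = (a.map (p.subtypeL.comp (p.orthogonalProjectionOnto) : H →ₗ[ℂ] H)).topologicalClosure := by
  change _ = (a.map (p.starProjection : H →ₗ[ℂ] H)).topologicalClosure
  apply le_antisymm
  · rintro x ⟨hxp, hx⟩
    have hPx := (a ⊔ pᗮ).topologicalClosure_map p.starProjection ⟨x, hx, rfl⟩
    rwa [Submodule.map_starProjection_sup_orthogonal, ContinuousLinearMap.coe_coe,
      Submodule.starProjection_eq_self_iff.mpr hxp] at hPx
  · exact le_inf
      (Submodule.topologicalClosure_minimal _
        (LinearMap.map_le_range.trans_eq p.range_starProjection)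
        p.isClosed_of_hasOrthogonalProjection)
      (Submodule.topologicalClosure_mono (a.map_starProjection_le_sup_orthogonal p))

theorem sasaki_eq_closure_image_projection
    {H : Type*} [NormedAddCommGroup H] [InnerProductSpace ℂ H] [CompleteSpace H]
    (a p : Submodule ℂ H) (ha : IsClosed (a : Set H)) (hp : IsClosed (p : Set H))
    [p.HasOrthogonalProjection] :
    p ⊓ (a ⊔ pᗮ).topologicalClosure
      = (a.map (p.subtypeL.comp (p.orthogonalProjectionOnto) : H →ₗ[ℂ] H)).topologicalClosure :=
  sasaki_eq_closure_image_projection_general a p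
end

section
/- Let H be a finite-dimensional Hilbert space and let b ≤ a & p in the lattice of subspaces, where & is the Sasaki projection. Then for every vector φ ∈ b there exists ψ ∈ a with φ = Π_p(ψ). -/
namespace Submodule

variable {𝕜 E : Type*} [RCLike 𝕜] [NormedAddCommGroup E] [InnerProductSpace 𝕜 E]
  (K : Submodule 𝕜 E) [K.HasOrthogonalProjection] (a : Submodule 𝕜 E)

theorem inf_sup_orthogonal_eq_map_starProjection :
    K ⊓ (a ⊔ Kᗮ) = a.map (K.starProjection : E →ₗ[𝕜] E) := by
  ext φ
  constructor
  · rintro ⟨hφK, hφ⟩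
    obtain ⟨ψ, hψ, w, hw, rfl⟩ := mem_sup.mp hφ
    refine ⟨ψ, hψ, eq_starProjection_of_mem_orthogonal hφK ?_⟩
    simpa using Kᗮ.neg_mem hw
  · rintro ⟨ψ, hψ, rfl⟩
    have hw : -(ψ - K.starProjection ψ) ∈ Kᗮ := Kᗮ.neg_mem (K.sub_starProjection_mem_orthogonal ψ)
    exact ⟨K.starProjection_apply_mem ψ, mem_sup.mpr ⟨ψ, hψ, _, hw, by abel⟩⟩

end Submodule

theorem exists_preimage_of_le_sasaki
    {H : Type*} [NormedAddCommGroup H] [InnerProductSpace ℂ H] [FiniteDimensional ℂ H]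
    (a b p : Submodule ℂ H) (hb : b ≤ p ⊓ (a ⊔ pᗮ)) :
    ∀ φ ∈ b, ∃ ψ ∈ a, φ = (Submodule.orthogonalProjectionOnto p ψ : H) := by
  intro φ hφ
  obtain ⟨ψ, hψ, hψφ⟩ := (hb.trans (p.inf_sup_orthogonal_eq_map_starProjection a).le) hφ
  exact ⟨ψ, hψ, hψφ.symm⟩
end

section
/- Let H be a finite-dimensional Hilbert space and F ⊆ L(H) a Sasaki filter with at most one minimal element. Then F is a principal upper set: there exists e ∈ L(H) with F = {p | e ≤ p}. -/
/-! Subspaces of a finite-dimensional space satisfy the descending chain condition, so every member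
of `F` lies above a minimal member of `F`; as there is only one, `F` is the upper set it generates. -/

theorem IsUpperSet.eq_Ici_of_minimal_subsingleton {α : Type*} [PartialOrder α] [WellFoundedLT α]
    {s : Set α} (hs : IsUpperSet s) (hne : s.Nonempty)
    (huniq : {x | Minimal (· ∈ s) x}.Subsingleton) : ∃ e, s = Set.Ici e := by
  obtain ⟨a, ha⟩ := hne
  obtain ⟨e, -, he⟩ := exists_minimal_le_of_wellFoundedLT (· ∈ s) a ha
  refine ⟨e, Set.Subset.antisymm (fun p hp => ?_) (fun p hp => hs hp he.prop)⟩
  obtain ⟨m, hmp, hm⟩ := exists_minimal_le_of_wellFoundedLT (· ∈ s) p hp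
  exact huniq he hm ▸ hmp

theorem sasaki_filter_principal_of_unique_minimal_general
    {H : Type*} [NormedAddCommGroup H] [InnerProductSpace ℂ H] [FiniteDimensional ℂ H]
    (F : Set (Submodule ℂ H))
    (hne : F.Nonempty)
    (hup : ∀ p q : Submodule ℂ H, p ∈ F → p ≤ q → q ∈ F)
    (hmin : ∀ m₁ m₂ : Submodule ℂ H,
      (m₁ ∈ F ∧ ∀ s ∈ F, ¬ s < m₁) → (m₂ ∈ F ∧ ∀ s ∈ F, ¬ s < m₂) → m₁ = m₂) :
    ∃ e : Submodule ℂ H, F = {p : Submodule ℂ H | e ≤ p} := by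
  have hminimal : {m | Minimal (· ∈ F) m}.Subsingleton := fun m₁ h₁ m₂ h₂ => by
    obtain ⟨hm₁, hlt₁⟩ := minimal_iff_forall_lt.1 h₁
    obtain ⟨hm₂, hlt₂⟩ := minimal_iff_forall_lt.1 h₂
    exact hmin m₁ m₂ ⟨hm₁, fun s hs hlt => hlt₁ hlt hs⟩ ⟨hm₂, fun s hs hlt => hlt₂ hlt hs⟩
  exact IsUpperSet.eq_Ici_of_minimal_subsingleton (fun p q hpq hp => hup p q hp hpq) hne hminimal

theorem sasaki_filter_principal_of_unique_minimal
    {H : Type*} [NormedAddCommGroup H] [InnerProductSpace ℂ H] [FiniteDimensional ℂ H]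
    (F : Set (Submodule ℂ H))
    (hne : F.Nonempty)
    (hup : ∀ p q : Submodule ℂ H, p ∈ F → p ≤ q → q ∈ F)
    (hsas : ∀ p q : Submodule ℂ H, p ∈ F → q ∈ F → q ⊓ (p ⊔ qᗮ) ∈ F)
    (hmin : ∀ m₁ m₂ : Submodule ℂ H,
      (m₁ ∈ F ∧ ∀ s ∈ F, ¬ s < m₁) → (m₂ ∈ F ∧ ∀ s ∈ F, ¬ s < m₂) → m₁ = m₂) :
    ∃ e : Submodule ℂ H, F = {p : Submodule ℂ H | e ≤ p} :=
  sasaki_filter_principal_of_unique_minimal_general F hne hup hmin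
end

section
/- Let H be a Hilbert space and p₁, ..., pₙ closed subspaces. Then the iterated Sasaki projection ((⋯(p₁ & p₂) & ⋯) & pₙ) in the lattice of closed subspaces is nonzero if and only if the composition of orthogonal projections Π_{pₙ} ∘ ⋯ ∘ Π_{p₁} is a nonzero operator. -/
/-!
The Sasaki projection onto `q` is the image under the orthogonal projection `Π_q`:
`q ⊓ (a ⊔ qᗮ) = Π_q a`. Iterating, the iterated Sasaki projection is the range of
`Π_{pₙ} ∘ ⋯ ∘ Π_{p₁}`, and a linear map has range `⊥` exactly when it is zero.
-/

namespace Submodule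

variable {𝕜 H : Type*} [RCLike 𝕜] [NormedAddCommGroup H] [InnerProductSpace 𝕜 H]

theorem inf_sup_orthogonal_eq_map_starProjection_s17 (a q : Submodule 𝕜 H)
    [q.HasOrthogonalProjection] : q ⊓ (a ⊔ qᗮ) = a.map (q.starProjection : H →ₗ[𝕜] H) := by
  ext x
  constructor
  · rintro ⟨hxq, hx⟩
    obtain ⟨y, hy, z, hz, rfl⟩ := mem_sup.mp hx
    refine ⟨y, hy, ?_⟩
    calc q.starProjection y = q.starProjection (y + z) := by
          rw [map_add, (starProjection_apply_eq_zero_iff q).mpr hz, add_zero]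
      _ = y + z := starProjection_eq_self_iff.mpr hxq
  · rintro ⟨y, hy, rfl⟩
    refine ⟨(q.orthogonalProjectionOnto y).2, ?_⟩
    simpa only [sub_sub_cancel, ContinuousLinearMap.coe_coe, SetLike.mem_coe] using
      sub_mem (mem_sup_left hy) (mem_sup_right (sub_starProjection_mem_orthogonal (K := q) y))

theorem foldl_inf_sup_orthogonal_range [FiniteDimensional 𝕜 H] :
    ∀ (qs : List (Submodule 𝕜 H)) (f : H →L[𝕜] H),
      qs.foldl (fun (a q : Submodule 𝕜 H) => q ⊓ (a ⊔ qᗮ)) (LinearMap.range (f : H →ₗ[𝕜] H)) =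
        LinearMap.range ((qs.foldl (fun (g : H →L[𝕜] H) q => q.starProjection ∘L g) f :
          H →L[𝕜] H) : H →ₗ[𝕜] H)
  | [], _ => rfl
  | q :: qs, f => by
    rw [List.foldl_cons, inf_sup_orthogonal_eq_map_starProjection_s17, ← LinearMap.range_comp]
    exact foldl_inf_sup_orthogonal_range qs (q.starProjection ∘L f)

end Submodule

theorem iterated_sasaki_ne_bot_iff_composition_ne_zero
    {H : Type*} [NormedAddCommGroup H] [InnerProductSpace ℂ H] [FiniteDimensional ℂ H]
    (n : ℕ) (p : Fin (n + 1) → Submodule ℂ H) :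
    (List.ofFn fun k : Fin n => p k.succ).foldl
        (fun (a q : Submodule ℂ H) => q ⊓ (a ⊔ qᗮ)) (p 0) ≠ ⊥ ↔
    (List.ofFn fun k : Fin (n + 1) => (p k).subtypeL.comp (Submodule.orthogonalProjectionOnto (p k))).foldl
        (fun acc f => f.comp acc) (ContinuousLinearMap.id ℂ H) ≠ 0 := by
  have hcomp : (List.ofFn fun k : Fin (n + 1) =>
        (p k).subtypeL.comp (Submodule.orthogonalProjectionOnto (p k))).foldl
        (fun acc f => f.comp acc) (ContinuousLinearMap.id ℂ H) =
      (List.ofFn fun k : Fin n => p k.succ).foldl (fun g q => q.starProjection ∘L g)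
        (p 0).starProjection := by
    rw [List.ofFn_succ, List.foldl_cons, ContinuousLinearMap.comp_id]
    refine Eq.trans ?_ (List.foldl_map (f := fun q : Submodule ℂ H => q.starProjection)
      (g := fun acc f => f ∘L acc))
    rw [List.map_ofFn]
    rfl
  rw [← Submodule.range_starProjection (p 0), Submodule.foldl_inf_sup_orthogonal_range, hcomp,
    ne_eq, LinearMap.range_eq_bot, ← ContinuousLinearMap.toLinearMap_zero,
    ContinuousLinearMap.coe_inj]
end
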